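/- arXiv:1304.0032 — 3 statements merged into one kernel-verified Lean document; each statement's English description precedes it below -/
import Mathlib

section
/- Let β solve β''/(1+(β')²) = (x/2 - 1/x)·β' - β/2 on (a, x₀) with x₀ ≥ 4, β(x₀⁻) = z₀ < 0 and lim_{x→x₀} β'(x) = +∞. Then there exists x_m ∈ [x₀ - 2, x₀) with β'(x_m) = 0. -/
open Set Real Filter

theorem stmt_15 (β : ℝ → ℝ) (a x₀ z₀ : ℝ) (hx₀ : 4 ≤ x₀) (ha : a < x₀ - 2)
    (hreg : ContDiffOn ℝ 3 β (Ioo a x₀))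
    (hode : ∀ x ∈ Ioo a x₀,
      deriv (deriv β) x / (1 + (deriv β x) ^ 2) = (x / 2 - 1 / x) * deriv β x - β x / 2)
    (hlim : Tendsto β (nhdsWithin x₀ (Iio x₀)) (nhds z₀)) (hz₀ : z₀ < 0)
    (hblow : Tendsto (deriv β) (nhdsWithin x₀ (Iio x₀)) atTop) :
    ∃ x_m ∈ Ico (x₀ - 2) x₀, deriv β x_m = 0 := by
  by_contra hcon
  push_neg at hcon
  set t₀ := x₀ - 2 with ht₀def
  have ht₀lt : t₀ < x₀ := by rw [ht₀def]; linarith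
  have ht₀2 : (2:ℝ) ≤ t₀ := by rw [ht₀def]; linarith
  have hIsub : Ico t₀ x₀ ⊆ Ioo a x₀ := fun x hx => ⟨lt_of_lt_of_le ha hx.1, hx.2⟩
  have hopen : IsOpen (Ioo a x₀) := isOpen_Ioo
  have hC2 : ContDiffOn ℝ 2 (deriv β) (Ioo a x₀) :=
    hreg.deriv_of_isOpen hopen (by norm_num)
  have hdβ : ∀ x ∈ Ioo a x₀, DifferentiableAt ℝ β x := fun x hx =>
    (hreg.differentiableOn (by norm_num)).differentiableAt (hopen.mem_nhds hx)
  have hdβ' : ∀ x ∈ Ioo a x₀, DifferentiableAt ℝ (deriv β) x := fun x hx =>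
    (hC2.differentiableOn (by norm_num)).differentiableAt (hopen.mem_nhds hx)
  have hcβ : ContinuousOn β (Ioo a x₀) := hreg.continuousOn
  have hcβ' : ContinuousOn (deriv β) (Ioo a x₀) := hC2.continuousOn
  -- rewritten ODE
  have hode' : ∀ x ∈ Ioo a x₀, deriv (deriv β) x
      = (1 + (deriv β x)^2) * ((x / 2 - 1 / x) * deriv β x - β x / 2) := by
    intro x hx
    have h := hode x hx
    have hpos : (0:ℝ) < 1 + (deriv β x)^2 := by positivity
    rw [div_eq_iff hpos.ne'] at h
    linarith [h]
  -- β' > 0 on [t₀, x₀)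
  have hβ'pos : ∀ x ∈ Ico t₀ x₀, 0 < deriv β x := by
    intro x hx
    rcases lt_or_gt_of_ne (hcon x hx) with hneg | hpos
    · exfalso
      obtain ⟨x₁, h1, hx₁mem⟩ :=
        ((hblow.eventually_ge_atTop 1).and
          (eventually_of_mem (Ioo_mem_nhdsLT_of_mem ⟨hx.2, le_rfl⟩) fun y hy => hy)).exists
      have hsub2 : Icc x x₁ ⊆ Ioo a x₀ := fun y hy =>
        ⟨lt_of_lt_of_le ha (le_trans hx.1 hy.1), lt_of_le_of_lt hy.2 hx₁mem.2⟩
      have hiv := intermediate_value_Icc (le_of_lt hx₁mem.1) (hcβ'.mono hsub2)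
      have h0 : (0:ℝ) ∈ Icc (deriv β x) (deriv β x₁) := ⟨hneg.le, by linarith⟩
      obtain ⟨c, hc, hc0⟩ := hiv h0
      exact hcon c ⟨le_trans hx.1 hc.1, lt_of_le_of_lt hc.2 hx₁mem.2⟩ hc0
    · exact hpos
  -- β strictly increasing on [t₀, x₀)
  have hmonoβ : StrictMonoOn β (Ico t₀ x₀) := by
    apply strictMonoOn_of_deriv_pos (convex_Ico _ _) (hcβ.mono hIsub)
    intro x hx
    rw [interior_Ico] at hx
    exact hβ'pos x ⟨hx.1.le, hx.2⟩
  -- β ≤ z₀ on [t₀, x₀)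
  have hβle : ∀ x ∈ Ico t₀ x₀, β x ≤ z₀ := by
    intro x hx
    refine ge_of_tendsto hlim ?_
    filter_upwards [Ioo_mem_nhdsLT_of_mem ⟨hx.2, le_rfl⟩] with y hy
    exact (hmonoβ hx ⟨le_trans hx.1 hy.1.le, hy.2⟩ hy.1).le
  have hbt : β t₀ < 0 := lt_of_le_of_lt (hβle t₀ ⟨le_rfl, ht₀lt⟩) hz₀
  -- β'' > 0 on (t₀, x₀)
  have hβ''pos : ∀ x ∈ Ioo t₀ x₀, 0 < deriv (deriv β) x := by
    intro x hx
    have hxm : x ∈ Ico t₀ x₀ := ⟨hx.1.le, hx.2⟩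
    rw [hode' x (hIsub hxm)]
    have h1 : 0 < deriv β x := hβ'pos x hxm
    have h2 : β x < 0 := lt_of_le_of_lt (hβle x hxm) hz₀
    have hx2 : (2:ℝ) ≤ x := le_trans ht₀2 hx.1.le
    have hx0 : (0:ℝ) < x := by linarith
    have h3 : 0 < x/2 - 1/x := by
      rw [sub_pos, div_lt_div_iff₀ hx0 two_pos]
      nlinarith
    have h4 : 0 < (x/2 - 1/x) * deriv β x - β x / 2 := by nlinarith [mul_pos h3 h1]
    positivity
  -- β' monotone on [t₀, x₀)
  have hβ'mono : MonotoneOn (deriv β) (Ico t₀ x₀) := by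
    apply monotoneOn_of_deriv_nonneg (convex_Ico _ _) (hcβ'.mono hIsub)
    · intro y hy
      rw [interior_Ico] at hy
      exact (hdβ' y (hIsub ⟨hy.1.le, hy.2⟩)).differentiableWithinAt
    · intro y hy
      rw [interior_Ico] at hy
      exact (hβ''pos y hy).le
  -- slope bound from MVT
  have hslope : ∀ x ∈ Ico t₀ x₀, β x - β t₀ ≤ (x - t₀) * deriv β x := by
    intro x hx
    rcases eq_or_lt_of_le hx.1 with heq | hlt
    · rw [← heq]; simp
    · have hsub3 : Icc t₀ x ⊆ Ioo a x₀ := fun y hy =>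
        ⟨lt_of_lt_of_le ha hy.1, lt_of_le_of_lt hy.2 hx.2⟩
      obtain ⟨c, hc, hcs⟩ := exists_deriv_eq_slope β hlt (hcβ.mono hsub3)
        (fun y hy => ((hdβ y (hsub3 ⟨hy.1.le, hy.2.le⟩)).differentiableWithinAt))
      have hcx : deriv β c ≤ deriv β x :=
        hβ'mono ⟨hc.1.le, hc.2.trans hx.2⟩ hx hc.2.le
      rw [hcs, div_le_iff₀ (by linarith)] at hcx
      nlinarith [hcx]
  set K := -β t₀ / 2 with hKdef
  have hKpos : 0 < K := by rw [hKdef]; linarith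
  -- β'' ≥ K on [t₀, x₀)
  have hβ''K : ∀ x ∈ Ico t₀ x₀, K ≤ deriv (deriv β) x := by
    intro x hx
    rw [hode' x (hIsub hx)]
    have hu := hβ'pos x hx
    have hb : β x ≤ z₀ := hβle x hx
    have hsl := hslope x hx
    have hx2 : (2:ℝ) ≤ x := le_trans ht₀2 hx.1
    have hx0 : (0:ℝ) < x := by linarith
    have h1x : 1/x ≤ 1/2 := by
      rw [div_le_div_iff₀ hx0 two_pos]; linarith
    have hbr : K ≤ (x/2 - 1/x) * deriv β x - β x / 2 := by
      have hcoef : (x - t₀)/2 ≤ x/2 - 1/x := by linarith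
      have h1 : (x - t₀)/2 * deriv β x ≤ (x/2 - 1/x) * deriv β x :=
        mul_le_mul_of_nonneg_right hcoef hu.le
      rw [hKdef]
      nlinarith [hsl]
    nlinarith [mul_nonneg (sq_nonneg (deriv β x)) (le_trans hKpos.le hbr)]
  -- first integration: β' x ≥ K (x - t₀)
  have hf1mono : MonotoneOn (fun y => deriv β y - K * y) (Ico t₀ x₀) := by
    apply monotoneOn_of_deriv_nonneg (convex_Ico _ _)
    · exact (hcβ'.mono hIsub).sub (continuous_const.mul continuous_id).continuousOn
    · intro y hy
      rw [interior_Ico] at hy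
      exact ((hdβ' y (hIsub ⟨hy.1.le, hy.2⟩)).sub (by fun_prop)).differentiableWithinAt
    · intro y hy
      rw [interior_Ico] at hy
      have hd := hdβ' y (hIsub ⟨hy.1.le, hy.2⟩)
      have hK : HasDerivAt (fun y : ℝ => K * y) K y := by
        simpa using (hasDerivAt_id y).const_mul K
      rw [HasDerivAt.deriv (f := fun y => deriv β y - K * y) (hd.hasDerivAt.sub hK)]
      have := hβ''K y ⟨hy.1.le, hy.2⟩
      linarith
  have hβ'lb : ∀ x ∈ Ico t₀ x₀, K * (x - t₀) ≤ deriv β x := by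
    intro x hx
    have h := hf1mono ⟨le_rfl, ht₀lt⟩ hx hx.1
    have h0 := hβ'pos t₀ ⟨le_rfl, ht₀lt⟩
    simp only at h
    nlinarith [h]
  -- second integration: β x ≥ β t₀ + K (x-t₀)²/2
  have hf2mono : MonotoneOn (fun y => β y - K * (y - t₀)^2 / 2) (Ico t₀ x₀) := by
    apply monotoneOn_of_deriv_nonneg (convex_Ico _ _)
    · exact (hcβ.mono hIsub).sub ((by fun_prop : Continuous fun y : ℝ => K * (y - t₀)^2 / 2).continuousOn)
    · intro y hy
      rw [interior_Ico] at hy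
      exact ((hdβ y (hIsub ⟨hy.1.le, hy.2⟩)).sub (by fun_prop)).differentiableWithinAt
    · intro y hy
      rw [interior_Ico] at hy
      have hd := hdβ y (hIsub ⟨hy.1.le, hy.2⟩)
      have hq : HasDerivAt (fun y : ℝ => K * (y - t₀)^2 / 2) (K * (y - t₀)) y := by
        have h := ((((hasDerivAt_id y).sub_const t₀).pow 2).const_mul K).div_const 2
        exact h.congr_deriv (by simp only [id]; norm_num; ring)
      rw [HasDerivAt.deriv (f := fun y => β y - K * (y - t₀)^2 / 2) (hd.hasDerivAt.sub hq)]
      have := hβ'lb y ⟨hy.1.le, hy.2⟩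
      linarith
  have hfin : ∀ x ∈ Ico t₀ x₀, β t₀ + K * (x - t₀)^2/2 ≤ β x := by
    intro x hx
    have h := hf2mono ⟨le_rfl, ht₀lt⟩ hx hx.1
    simp only [sub_self] at h
    norm_num at h
    linarith
  -- pass to the limit x → x₀⁻
  have hlim2 : Tendsto (fun x => β t₀ + K * (x - t₀)^2/2) (nhdsWithin x₀ (Iio x₀))
      (nhds (β t₀ + K * (x₀ - t₀)^2/2)) := by
    exact (Continuous.tendsto (by fun_prop) x₀).mono_left nhdsWithin_le_nhds
  have hz : β t₀ + K * (x₀ - t₀)^2/2 ≤ z₀ := by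
    refine le_of_tendsto_of_tendsto hlim2 hlim ?_
    filter_upwards [Ico_mem_nhdsLT_of_mem ⟨ht₀lt, le_rfl⟩] with y hy using hfin y hy
  have h2 : x₀ - t₀ = 2 := by rw [ht₀def]; ring
  rw [h2, hKdef] at hz
  nlinarith [hz]
end

section
/- Let γ and β be two solutions of y''/(1+(y')²) = (x/2 - 1/x)·y' - y/2 on [2√2, x₀), both extending continuously to x₀ with common value z₀ = γ(x₀) = β(x₀), where γ' → -∞ and β' → +∞ at x₀, γ ≤ 0 and β < 0 on [2√2, x₀), x₀ > √2, and z₀ < 0. Suppose additionally the curves (x,γ(x)) and (x,β(x)) together form the graph (α(z), z) of a solution of α''/(1+(α')²) = (1/α - α/2) + (z/2)·α' near (x₀, z₀) with α(z₀)=x₀, α'(z₀)=0. Then γ(x) + β(x) > 2z₀ for all x ∈ [2√2, x₀). -/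
open Set Real Filter

lemma smooth2 {f : ℝ → ℝ} {s : Set ℝ} (hs : IsOpen s) (hf : ContDiffOn ℝ 2 f s) :
    (∀ x ∈ s, HasDerivAt f (deriv f x) x) ∧
    (∀ x ∈ s, HasDerivAt (deriv f) (deriv (deriv f) x) x) ∧
    ContinuousOn (deriv (deriv f)) s := by
  have h1 : ContDiffOn ℝ 1 (deriv f) s := by
    have := hf.deriv_of_isOpen hs (m := 1) (by norm_num)
    exact this
  have h2 : ContDiffOn ℝ 0 (deriv (deriv f)) s := by
    have := h1.deriv_of_isOpen hs (m := 0) (by norm_num)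
    exact this
  refine ⟨fun x hx => ?_, fun x hx => ?_, h2.continuousOn⟩
  · exact ((hf.differentiableOn (by norm_num) x hx).differentiableAt
      (hs.mem_nhds hx)).hasDerivAt
  · exact ((h1.differentiableOn (by norm_num) x hx).differentiableAt
      (hs.mem_nhds hx)).hasDerivAt

lemma slope_sign {f : ℝ → ℝ} {c x₀ : ℝ} (hf : HasDerivAt f c x₀) (h0 : f x₀ = 0) (hc : 0 < c) :
    (∀ᶠ u in nhdsWithin x₀ (Ioi x₀), 0 < f u) ∧ (∀ᶠ u in nhdsWithin x₀ (Iio x₀), f u < 0) := by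
  have hs := hasDerivAt_iff_tendsto_slope.1 hf
  have hev : ∀ᶠ u in nhdsWithin x₀ {x₀}ᶜ, 0 < slope f x₀ u :=
    hs (Ioi_mem_nhds hc)
  constructor
  · filter_upwards [nhdsWithin_mono x₀ (fun u (hu : u ∈ Ioi x₀) => ne_of_gt hu) hev,
      self_mem_nhdsWithin] with u hu hu'
    have : 0 < (f u - f x₀) / (u - x₀) := by
      simpa [slope_def_field, div_eq_iff (sub_ne_zero.2 (ne_of_gt (show x₀ < u from hu')))] using hu
    have := mul_pos this (sub_pos.2 (mem_Ioi.1 hu'))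
    rw [div_mul_cancel₀] at this
    · linarith [h0 ▸ this]
    · exact sub_ne_zero.2 (ne_of_gt hu')
  · filter_upwards [nhdsWithin_mono x₀ (fun u (hu : u ∈ Iio x₀) => ne_of_lt hu) hev,
      self_mem_nhdsWithin] with u hu hu'
    have h1 : 0 < (f u - f x₀) / (u - x₀) := by
      simpa [slope_def_field] using hu
    have h2 : u - x₀ < 0 := sub_neg.2 hu'
    nlinarith [div_mul_cancel₀ (f u - f x₀) (ne_of_lt h2), h0]

lemma aux16_1 (α : ℝ → ℝ) (x₀ z₀ ε : ℝ) (hε : 0 < ε) (hx₀pos : 0 < x₀)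
    (hαd : ∀ x ∈ Ioo (z₀ - ε) (z₀ + ε), HasDerivAt α (deriv α x) x)
    (hαd2 : ∀ x ∈ Ioo (z₀ - ε) (z₀ + ε), HasDerivAt (deriv α) (deriv (deriv α) x) x)
    (hodeα : ∀ z ∈ Ioo (z₀ - ε) (z₀ + ε),
      deriv (deriv α) z / (1 + (deriv α z) ^ 2) = (1 / α z - α z / 2) + z / 2 * deriv α z)
    (hα0 : α z₀ = x₀) (hα0' : deriv α z₀ = 0)
    (hz₀J : z₀ ∈ Ioo (z₀ - ε) (z₀ + ε))
    (A : ℝ)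
    (hda : HasDerivAt (deriv α) A z₀)
    (ha : HasDerivAt α 0 z₀) :
    HasDerivAt (deriv (deriv α)) (z₀ * A / 2) z₀ := by
  have hαne : α z₀ ≠ 0 := by rw [hα0]; exact ne_of_gt hx₀pos
  set G : ℝ → ℝ := fun z => (1 + deriv α z ^ 2) * (1 / α z - α z / 2 + z / 2 * deriv α z)
    with hG
  have hGd : HasDerivAt G
      ((2 * deriv α z₀ ^ 1 * A) * (1 / α z₀ - α z₀ / 2 + z₀ / 2 * deriv α z₀)
        + (1 + deriv α z₀ ^ 2) *
          (((0 * α z₀ - 1 * 0) / α z₀ ^ 2 - 0 / 2) + (1 / 2 * deriv α z₀ + z₀ / 2 * A))) z₀ := by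
    have h1 : HasDerivAt (fun z => 1 + deriv α z ^ 2) (0 + 2 * deriv α z₀ ^ 1 * A) z₀ :=
      (hasDerivAt_const z₀ (1:ℝ)).add (hda.pow 2)
    have h2 : HasDerivAt (fun z => 1 / α z) ((0 * α z₀ - 1 * 0) / α z₀ ^ 2) z₀ :=
      (hasDerivAt_const z₀ (1:ℝ)).div ha hαne
    have h3 : HasDerivAt (fun z => z / 2 * deriv α z)
        (1 / 2 * deriv α z₀ + z₀ / 2 * A) z₀ :=
      ((hasDerivAt_id z₀).div_const 2).mul hda
    have h4 := ((h2.sub (ha.div_const 2)).add h3)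
    have := h1.mul h4
    refine this.congr_deriv ?_
    simp only [Pi.add_apply, Pi.sub_apply]
    ring
  have hGeq : ∀ᶠ z in nhds z₀, deriv (deriv α) z = G z := by
    filter_upwards [isOpen_Ioo.mem_nhds hz₀J] with z hz
    have hne : (1 + deriv α z ^ 2) ≠ 0 := by positivity
    have := hodeα z hz
    rw [div_eq_iff hne] at this
    rw [hG]; rw [this]; ring
  have := hGd.congr_of_eventuallyEq hGeq
  refine this.congr_deriv ?_
  symm
  rw [hα0', hα0]
  field_simp
  ring

lemma aux16_2 (α : ℝ → ℝ) (z₀ ε A : ℝ) (hε : 0 < ε) (hz₀ : z₀ < 0) (hAneg : A < 0)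
    (hαd : ∀ x ∈ Ioo (z₀ - ε) (z₀ + ε), HasDerivAt α (deriv α x) x)
    (hαd2 : ∀ x ∈ Ioo (z₀ - ε) (z₀ + ε), HasDerivAt (deriv α) (deriv (deriv α) x) x)
    (hα0' : deriv α z₀ = 0)
    (hda : HasDerivAt (deriv α) A z₀)
    (hdd3 : HasDerivAt (deriv (deriv α)) (z₀ * A / 2) z₀) :
    ∃ m, 0 < m ∧ m < ε ∧ (∀ u, 0 < u → u ≤ m → α (z₀ - u) < α (z₀ + u)) ∧
      StrictMonoOn α (Icc (z₀ - m) z₀) := by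
  have hc : 0 < z₀ * A := mul_pos_of_neg_of_neg hz₀ hAneg
  have hplus : ∀ u : ℝ, HasDerivAt (fun v : ℝ => z₀ + v) 1 u := fun u =>
    (hasDerivAt_id u).const_add z₀
  have hminus : ∀ u : ℝ, HasDerivAt (fun v : ℝ => z₀ - v) (-1) u := fun u => by
    simpa using (hasDerivAt_id u).const_sub z₀
  set h2 : ℝ → ℝ := fun u => deriv (deriv α) (z₀ + u) - deriv (deriv α) (z₀ - u) with hh2def
  have p1 : HasDerivAt (fun u : ℝ => deriv (deriv α) (z₀ + u)) (z₀ * A / 2 * 1) 0 := by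
    have := HasDerivAt.comp 0 (by simpa using hdd3) (hplus 0)
    simpa [Function.comp_def] using this
  have p2 : HasDerivAt (fun u : ℝ => deriv (deriv α) (z₀ - u)) (z₀ * A / 2 * (-1)) 0 := by
    have := HasDerivAt.comp 0 (by simpa using hdd3) (hminus 0)
    simpa [Function.comp_def] using this
  have hh2 : HasDerivAt h2 (z₀ * A) 0 := by
    have := p1.sub p2
    refine this.congr_deriv ?_
    ring
  obtain ⟨hr, -⟩ := slope_sign hh2 (by simp [hh2def]) hc
  obtain ⟨r1, hr1pos, hr1⟩ : ∃ r1 > 0, ∀ u, 0 < u → u < r1 → 0 < h2 u := by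
    obtain ⟨u, hu, hsub⟩ := mem_nhdsGT_iff_exists_Ioo_subset.1 hr
    exact ⟨u, hu, fun v hv hv' => hsub ⟨hv, hv'⟩⟩
  have hnegd : HasDerivAt (fun z => -deriv α z) (-A) z₀ := hda.neg
  obtain ⟨-, hm'⟩ := slope_sign hnegd (by simp [hα0']) (neg_pos.2 hAneg)
  obtain ⟨r2, hr2pos, hr2⟩ : ∃ r2 > 0, ∀ z, z₀ - r2 < z → z < z₀ → 0 < deriv α z := by
    obtain ⟨l, hl, hsub⟩ := mem_nhdsLT_iff_exists_Ioo_subset.1 hm'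
    refine ⟨z₀ - l, by simp [sub_pos]; exact hl, fun z hz hz' => ?_⟩
    have := hsub (show z ∈ Ioo l z₀ by constructor <;> [linarith; exact hz'])
    simpa using this
  set m : ℝ := min (min (r1 / 2) (r2 / 2)) (ε / 2) with hm
  have hmpos : 0 < m := by positivity
  have hmε : m < ε := lt_of_le_of_lt (min_le_right _ _) (by linarith)
  have hmr1 : m < r1 := lt_of_le_of_lt (le_trans (min_le_left _ _) (min_le_left _ _)) (by linarith)
  have hmr2 : m < r2 := lt_of_le_of_lt (le_trans (min_le_left _ _) (min_le_right _ _)) (by linarith)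
  have hJmem : ∀ u : ℝ, |u| ≤ m → (z₀ + u ∈ Ioo (z₀ - ε) (z₀ + ε) ∧ z₀ - u ∈ Ioo (z₀ - ε) (z₀ + ε)) := by
    intro u hu
    rw [abs_le] at hu
    simp only [mem_Ioo]
    constructor <;> constructor <;> linarith
  refine ⟨m, hmpos, hmε, ?_, ?_⟩
  · -- α (z₀ - u) < α (z₀ + u) for u ∈ (0, m]
    set h1 : ℝ → ℝ := fun u => deriv α (z₀ + u) + deriv α (z₀ - u) with hh1def
    set h : ℝ → ℝ := fun u => α (z₀ + u) - α (z₀ - u) with hhdef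
    have hh1d : ∀ u ∈ Icc (0:ℝ) m, HasDerivAt h1 (h2 u) u := by
      intro u hu
      have habs : |u| ≤ m := by rw [abs_le]; exact ⟨by linarith [hu.1, hmpos], hu.2⟩
      obtain ⟨hp, hq⟩ := hJmem u habs
      have q1 := HasDerivAt.comp u (hαd2 _ hp) (hplus u)
      have q2 := HasDerivAt.comp u (hαd2 _ hq) (hminus u)
      have := q1.add q2
      have heq : deriv (deriv α) (z₀ + u) * 1 + deriv (deriv α) (z₀ - u) * (-1) = h2 u := by
        rw [hh2def]; ring
      rw [heq] at this
      exact this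
    have hhd : ∀ u ∈ Icc (0:ℝ) m, HasDerivAt h (h1 u) u := by
      intro u hu
      have habs : |u| ≤ m := by rw [abs_le]; exact ⟨by linarith [hu.1, hmpos], hu.2⟩
      obtain ⟨hp, hq⟩ := hJmem u habs
      have q1 := HasDerivAt.comp u (hαd _ hp) (hplus u)
      have q2 := HasDerivAt.comp u (hαd _ hq) (hminus u)
      have := q1.sub q2
      have heq : deriv α (z₀ + u) * 1 - deriv α (z₀ - u) * (-1) = h1 u := by
        rw [hh1def]; ring
      rw [heq] at this
      exact this
    have hmono1 : StrictMonoOn h1 (Icc 0 m) := by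
      apply strictMonoOn_of_deriv_pos (convex_Icc _ _)
      · exact fun u hu => ((hh1d u hu).continuousAt).continuousWithinAt
      · intro u hu
        rw [interior_Icc] at hu
        rw [(hh1d u ⟨le_of_lt hu.1, le_of_lt hu.2⟩).deriv]
        exact hr1 u hu.1 (lt_of_lt_of_le (lt_of_lt_of_le hu.2 le_rfl) (le_of_lt hmr1))
    have h1pos : ∀ u, 0 < u → u ≤ m → 0 < h1 u := by
      intro u hu hu'
      have := hmono1 (left_mem_Icc.2 (le_of_lt hmpos)) ⟨le_of_lt hu, hu'⟩ hu
      have h10 : h1 0 = 0 := by simp [hh1def, hα0']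
      linarith [h10 ▸ this]
    have hmono : StrictMonoOn h (Icc 0 m) := by
      apply strictMonoOn_of_deriv_pos (convex_Icc _ _)
      · exact fun u hu => ((hhd u hu).continuousAt).continuousWithinAt
      · intro u hu
        rw [interior_Icc] at hu
        rw [(hhd u ⟨le_of_lt hu.1, le_of_lt hu.2⟩).deriv]
        exact h1pos u hu.1 (le_of_lt hu.2)
    intro u hu hu'
    have := hmono (left_mem_Icc.2 (le_of_lt hmpos)) ⟨le_of_lt hu, hu'⟩ hu
    have h0 : h 0 = 0 := by simp [hhdef]
    have : 0 < h u := by linarith [h0 ▸ this]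
    simpa [hhdef, sub_pos] using this
  · -- strict mono of α on the left
    apply strictMonoOn_of_deriv_pos (convex_Icc _ _)
    · intro z hz
      have hzJ : z ∈ Ioo (z₀ - ε) (z₀ + ε) := by
        constructor <;> simp only [mem_Icc] at hz <;> [linarith [hz.1]; linarith [hz.2]]
      exact ((hαd z hzJ).continuousAt).continuousWithinAt
    · intro z hz
      rw [interior_Icc] at hz
      exact hr2 z (by linarith [hz.1]) hz.2

lemma aux16_3 (γ β α : ℝ → ℝ) (x₀ z₀ η m : ℝ) (s2 : ℝ)
    (hs2pos : 0 < s2) (hx₀' : s2 < x₀) (hη : 0 < η) (hmpos : 0 < m)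
    (hcontγ : ContinuousOn γ (Ico s2 x₀))
    (hcontβ : ContinuousOn β (Ico s2 x₀))
    (hlimγ : Tendsto γ (nhdsWithin x₀ (Iio x₀)) (nhds z₀))
    (hlimβ : Tendsto β (nhdsWithin x₀ (Iio x₀)) (nhds z₀))
    (hblowγ : Tendsto (deriv γ) (nhdsWithin x₀ (Iio x₀)) atBot)
    (hblowβ : Tendsto (deriv β) (nhdsWithin x₀ (Iio x₀)) atTop)
    (hgraph : ∀ x ∈ Ioo (x₀ - η) x₀, α (γ x) = x ∧ α (β x) = x)
    (hcmp : ∀ u, 0 < u → u ≤ m → α (z₀ - u) < α (z₀ + u))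
    (hmono : StrictMonoOn α (Icc (z₀ - m) z₀)) :
    ∃ l, s2 ≤ l ∧ l < x₀ ∧ ∀ x ∈ Ioo l x₀, 2 * z₀ < γ x + β x := by
  have hev : ∀ᶠ x in nhdsWithin x₀ (Iio x₀),
      deriv γ x < 0 ∧ 0 < deriv β x ∧ x ∈ Ioo (x₀ - η) x₀ ∧ s2 < x ∧
        |γ x - z₀| < m ∧ |β x - z₀| < m := by
    have e1 : ∀ᶠ x in nhdsWithin x₀ (Iio x₀), deriv γ x < 0 :=
      hblowγ.eventually (eventually_lt_atBot 0)
    have e2 : ∀ᶠ x in nhdsWithin x₀ (Iio x₀), 0 < deriv β x :=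
      hblowβ.eventually (eventually_gt_atTop 0)
    have e3 : ∀ᶠ x in nhdsWithin x₀ (Iio x₀), x ∈ Ioo (x₀ - η) x₀ :=
      Ioo_mem_nhdsLT_of_mem (by constructor <;> [linarith; rfl])
    have e4 : ∀ᶠ x in nhdsWithin x₀ (Iio x₀), x ∈ Ioo s2 x₀ :=
      Ioo_mem_nhdsLT_of_mem (by constructor <;> [linarith; rfl])
    have e5 : ∀ᶠ x in nhdsWithin x₀ (Iio x₀), |γ x - z₀| < m := by
      have := hlimγ (Metric.ball_mem_nhds z₀ hmpos)
      filter_upwards [this] with x hx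
      simpa [Real.dist_eq] using hx
    have e6 : ∀ᶠ x in nhdsWithin x₀ (Iio x₀), |β x - z₀| < m := by
      have := hlimβ (Metric.ball_mem_nhds z₀ hmpos)
      filter_upwards [this] with x hx
      simpa [Real.dist_eq] using hx
    filter_upwards [e1, e2, e3, e4, e5, e6] with x h1 h2 h3 h4 h5 h6
    exact ⟨h1, h2, h3, h4.1, h5, h6⟩
  obtain ⟨l, hl, hsub⟩ := mem_nhdsLT_iff_exists_Ioo_subset.1 hev
  refine ⟨max l s2, le_max_right _ _, max_lt hl hx₀', fun x hx => ?_⟩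
  have hxl : x ∈ Ioo l x₀ := ⟨lt_of_le_of_lt (le_max_left _ _) hx.1, hx.2⟩
  obtain ⟨hdγ, hdβ, hxη, hxs2, hγm, hβm⟩ := hsub hxl
  -- γ is strictly decreasing to the right of x, so γ x > z₀; similarly β x < z₀
  have key : ∀ y ∈ Ioo l x₀, z₀ ≤ γ y ∧ β y ≤ z₀ := by
    intro y hy
    have hanti : ∀ y' ∈ Ioo y x₀, γ y' < γ y ∧ β y < β y' := by
      intro y' hy'
      have hIccsub : Icc y y' ⊆ Ico s2 x₀ := by
        intro w hw
        have hys2 : s2 < y := (hsub hy).2.2.2.1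
        exact ⟨le_of_lt (lt_of_lt_of_le hys2 hw.1), lt_of_le_of_lt hw.2 hy'.2⟩
      have hantiγ : StrictAntiOn γ (Icc y y') := by
        apply strictAntiOn_of_deriv_neg (convex_Icc _ _) (hcontγ.mono hIccsub)
        intro w hw
        rw [interior_Icc] at hw
        exact (hsub ⟨lt_trans hy.1 hw.1, lt_trans hw.2 hy'.2⟩).1
      have hmonoβ : StrictMonoOn β (Icc y y') := by
        apply strictMonoOn_of_deriv_pos (convex_Icc _ _) (hcontβ.mono hIccsub)
        intro w hw
        rw [interior_Icc] at hw
        exact (hsub ⟨lt_trans hy.1 hw.1, lt_trans hw.2 hy'.2⟩).2.1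
      have hyy' : y < y' := hy'.1
      exact ⟨hantiγ (left_mem_Icc.2 (le_of_lt hyy')) (right_mem_Icc.2 (le_of_lt hyy')) hyy',
        hmonoβ (left_mem_Icc.2 (le_of_lt hyy')) (right_mem_Icc.2 (le_of_lt hyy')) hyy'⟩
    have hne : (nhdsWithin x₀ (Iio x₀)).NeBot := nhdsLT_neBot x₀
    constructor
    · apply le_of_tendsto hlimγ
      filter_upwards [Ioo_mem_nhdsLT_of_mem (show x₀ ∈ Ioc y x₀ from ⟨hy.2, le_rfl⟩)] with y' hy'
      exact le_of_lt (hanti y' hy').1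
    · apply ge_of_tendsto hlimβ
      filter_upwards [Ioo_mem_nhdsLT_of_mem (show x₀ ∈ Ioc y x₀ from ⟨hy.2, le_rfl⟩)] with y' hy'
      exact le_of_lt (hanti y' hy').2
  -- strict versions at x
  set x'' : ℝ := (x + x₀) / 2 with hx''
  have hx''mem : x'' ∈ Ioo x x₀ := by constructor <;> simp [hx''] <;> linarith [hx.2, hxl.1]
  have hx''mem' : x'' ∈ Ioo l x₀ := ⟨lt_trans hxl.1 hx''mem.1, hx''mem.2⟩
  have hγx : z₀ < γ x := by
    have h1 := (key x'' hx''mem').1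
    -- γ x'' < γ x
    have h2 : γ x'' < γ x := by
      have hIccsub : Icc x x'' ⊆ Ico s2 x₀ := fun w hw =>
        ⟨le_of_lt (lt_of_lt_of_le hxs2 hw.1), lt_of_le_of_lt hw.2 hx''mem.2⟩
      have : StrictAntiOn γ (Icc x x'') := by
        apply strictAntiOn_of_deriv_neg (convex_Icc _ _) (hcontγ.mono hIccsub)
        intro w hw
        rw [interior_Icc] at hw
        exact (hsub ⟨lt_trans hxl.1 hw.1, lt_trans hw.2 hx''mem.2⟩).1
      exact this (left_mem_Icc.2 (le_of_lt hx''mem.1)) (right_mem_Icc.2 (le_of_lt hx''mem.1))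
        hx''mem.1
    linarith
  have hβx : β x < z₀ := by
    have h1 := (key x'' hx''mem').2
    have h2 : β x < β x'' := by
      have hIccsub : Icc x x'' ⊆ Ico s2 x₀ := fun w hw =>
        ⟨le_of_lt (lt_of_lt_of_le hxs2 hw.1), lt_of_le_of_lt hw.2 hx''mem.2⟩
      have : StrictMonoOn β (Icc x x'') := by
        apply strictMonoOn_of_deriv_pos (convex_Icc _ _) (hcontβ.mono hIccsub)
        intro w hw
        rw [interior_Icc] at hw
        exact (hsub ⟨lt_trans hxl.1 hw.1, lt_trans hw.2 hx''mem.2⟩).2.1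
      exact this (left_mem_Icc.2 (le_of_lt hx''mem.1)) (right_mem_Icc.2 (le_of_lt hx''mem.1))
        hx''mem.1
    linarith
  -- now the comparison with α
  set t : ℝ := γ x - z₀ with ht
  set s : ℝ := z₀ - β x with hs
  have htpos : 0 < t := by simp [ht]; linarith
  have hspos : 0 < s := by simp [hs]; linarith
  have htm : t < m := by rw [abs_lt] at hγm; linarith [hγm.2]
  have hsm : s < m := by rw [abs_lt] at hβm; linarith [hβm.1]
  obtain ⟨hαγ, hαβ⟩ := hgraph x hxη
  have hαt : α (z₀ + t) = x := by rw [show z₀ + t = γ x by rw [ht]; ring]; exact hαγ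
  have hαs : α (z₀ - s) = x := by rw [show z₀ - s = β x by rw [hs]; ring]; exact hαβ
  have hcmp' : α (z₀ - t) < α (z₀ + t) := hcmp t htpos (le_of_lt htm)
  have hst : s < t := by
    by_contra hcon
    push_neg at hcon  -- t ≤ s
    have h1 : z₀ - s ≤ z₀ - t := by linarith
    have hmem1 : z₀ - s ∈ Icc (z₀ - m) z₀ := ⟨by linarith, by linarith⟩
    have hmem2 : z₀ - t ∈ Icc (z₀ - m) z₀ := ⟨by linarith, by linarith⟩
    rcases eq_or_lt_of_le h1 with heq | hlt
    · rw [← heq, hαs, hαt] at hcmp'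
      exact lt_irrefl _ hcmp'
    · have h2 := hmono hmem1 hmem2 hlt
      rw [hαs] at h2
      rw [hαt] at hcmp'
      linarith
  have : γ x + β x = 2 * z₀ + (t - s) := by rw [ht, hs]; ring
  linarith

lemma aux16_4 (γ β : ℝ → ℝ) (x₀ z₀ l : ℝ) (s2 : ℝ)
    (hx₀' : s2 < x₀) (hz₀ : z₀ < 0)
    (hcontγ : ContinuousOn γ (Ico s2 x₀))
    (hcontβ : ContinuousOn β (Ico s2 x₀))
    (hγd : ∀ x ∈ Ioo s2 x₀, HasDerivAt γ (deriv γ x) x)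
    (hγd2 : ∀ x ∈ Ioo s2 x₀, HasDerivAt (deriv γ) (deriv (deriv γ) x) x)
    (hγc2 : ContinuousOn (deriv (deriv γ)) (Ioo s2 x₀))
    (hβd : ∀ x ∈ Ioo s2 x₀, HasDerivAt β (deriv β x) x)
    (hβd2 : ∀ x ∈ Ioo s2 x₀, HasDerivAt (deriv β) (deriv (deriv β) x) x)
    (hβc2 : ContinuousOn (deriv (deriv β)) (Ioo s2 x₀))
    (hodeγ : ∀ x ∈ Ioo s2 x₀,
      deriv (deriv γ) x / (1 + (deriv γ x) ^ 2) = (x / 2 - 1 / x) * deriv γ x - γ x / 2)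
    (hodeβ : ∀ x ∈ Ioo s2 x₀,
      deriv (deriv β) x / (1 + (deriv β x) ^ 2) = (x / 2 - 1 / x) * deriv β x - β x / 2)
    (hγneg : ∀ x ∈ Ico s2 x₀, γ x ≤ 0)
    (hβneg : ∀ x ∈ Ico s2 x₀, β x < 0)
    (hlimγ : Tendsto γ (nhdsWithin x₀ (Iio x₀)) (nhds z₀))
    (hlimβ : Tendsto β (nhdsWithin x₀ (Iio x₀)) (nhds z₀))
    (hls2 : s2 ≤ l) (hlx₀ : l < x₀)
    (hstep1 : ∀ x ∈ Ioo l x₀, 2 * z₀ < γ x + β x) :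
    ∀ x ∈ Ico s2 x₀, 2 * z₀ < γ x + β x := by
  intro x₁ hx₁
  by_contra hcon
  push_neg at hcon
  set F : ℝ → ℝ := fun y => if y < x₀ then γ y + β y else 2 * z₀ with hF
  have hx₁lt : x₁ < x₀ := hx₁.2
  have hIcoSub : Ico x₁ x₀ ⊆ Ico s2 x₀ := fun w hw => ⟨le_trans hx₁.1 hw.1, hw.2⟩
  have hFeqIio : ∀ y ∈ Iio x₀, F y = γ y + β y := fun y hy => if_pos hy
  have hFcont : ContinuousOn F (Icc x₁ x₀) := by
    intro y hy
    rcases lt_or_eq_of_le hy.2 with hylt | hyeq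
    · have hbase : ContinuousWithinAt (fun w => γ w + β w) (Ico x₁ x₀) y :=
        ((hcontγ.add hcontβ).mono hIcoSub) y ⟨hy.1, hylt⟩
      have : ContinuousWithinAt F (Ico x₁ x₀) y := by
        apply hbase.congr (fun w hw => hFeqIio w hw.2) (hFeqIio y hylt)
      rw [show Ico x₁ x₀ = Icc x₁ x₀ ∩ Iio x₀ by
        ext w
        simp only [mem_Ico, mem_Icc, mem_inter_iff, mem_Iio]
        constructor
        · rintro ⟨h1, h2⟩; exact ⟨⟨h1, le_of_lt h2⟩, h2⟩
        · rintro ⟨⟨h1, -⟩, h2⟩; exact ⟨h1, h2⟩] at this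
      exact (continuousWithinAt_inter (Iio_mem_nhds hylt)).1 this
    · subst hyeq
      unfold ContinuousWithinAt
      have hFx₀ : F y = 2 * z₀ := if_neg (lt_irrefl y)
      rw [hFx₀]
      have hsplit : Icc x₁ y = Ico x₁ y ∪ {y} := (Ico_union_right (le_of_lt hx₁lt)).symm
      rw [hsplit, nhdsWithin_union]
      rw [tendsto_sup]
      constructor
      · have hle : nhdsWithin y (Ico x₁ y) ≤ nhdsWithin y (Iio y) :=
          nhdsWithin_mono y Ico_subset_Iio_self
        have hbase : Tendsto (fun w => γ w + β w) (nhdsWithin y (Iio y)) (nhds (2 * z₀)) := by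
          have := hlimγ.add hlimβ
          rw [show z₀ + z₀ = 2 * z₀ by ring] at this
          exact this
        apply Tendsto.congr' _ (hbase.mono_left hle)
        filter_upwards [self_mem_nhdsWithin] with w hw
        exact (hFeqIio w (Ico_subset_Iio_self hw)).symm
      · rw [nhdsWithin_singleton]
        exact hFx₀ ▸ tendsto_pure_nhds F y
  obtain ⟨xb, hxbmem, hxbmax⟩ :=
    isCompact_Icc.exists_isMaxOn (nonempty_Icc.2 (le_of_lt hx₁lt)) hFcont
  set x₂ : ℝ := (max x₁ l + x₀) / 2 with hx₂
  have hx₂mem : x₂ ∈ Ioo l x₀ := by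
    constructor <;> simp [hx₂] <;> [linarith [le_max_right x₁ l]; linarith [max_lt hx₁lt hlx₀]]
  have hx₂mem' : x₂ ∈ Icc x₁ x₀ := by
    constructor
    · rw [hx₂]
      have h1 := le_max_left x₁ l
      linarith
    · exact le_of_lt hx₂mem.2
  have hx₂gt : 2 * z₀ < F x₂ := by
    rw [hFeqIio x₂ hx₂mem.2]
    exact hstep1 x₂ hx₂mem
  have hmaxval : F x₂ ≤ F xb := hxbmax hx₂mem'
  have hxbne0 : xb ≠ x₀ := by
    intro h
    rw [h] at hmaxval
    have hFx0 : F x₀ = 2 * z₀ := if_neg (lt_irrefl x₀)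
    rw [hFx0] at hmaxval
    linarith
  have hxbne1 : xb ≠ x₁ := by
    intro h
    rw [h] at hmaxval
    rw [hFeqIio x₁ hx₁lt] at hmaxval
    linarith
  have hxbI : xb ∈ Ioo x₁ x₀ :=
    ⟨lt_of_le_of_ne hxbmem.1 (Ne.symm hxbne1), lt_of_le_of_ne hxbmem.2 hxbne0⟩
  have hxbI' : xb ∈ Ioo s2 x₀ := ⟨lt_of_le_of_lt hx₁.1 hxbI.1, hxbI.2⟩
  set δ : ℝ → ℝ := fun y => γ y + β y with hδ
  have hFδ : ∀ᶠ y in nhds xb, F y = δ y := by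
    filter_upwards [Iio_mem_nhds hxbI.2] with y hy
    exact hFeqIio y hy
  have hlocmax : IsLocalMax δ xb := by
    have h1 : IsLocalMax F xb := hxbmax.isLocalMax (Icc_mem_nhds hxbI.1 hxbI.2)
    have h2 : F xb = δ xb := hFeqIio xb hxbI.2
    unfold IsLocalMax IsMaxFilter at h1 ⊢
    filter_upwards [h1, hFδ] with y hy hy'
    rw [← hy', ← h2]
    exact hy
  have hδd : ∀ y ∈ Ioo s2 x₀, HasDerivAt δ (deriv γ y + deriv β y) y := fun y hy =>
    (hγd y hy).add (hβd y hy)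
  have hδ'0 : deriv γ xb + deriv β xb = 0 := by
    rw [← (hδd xb hxbI').deriv]
    exact hlocmax.deriv_eq_zero
  set δ' : ℝ → ℝ := fun y => deriv γ y + deriv β y with hδ'
  set δ'' : ℝ → ℝ := fun y => deriv (deriv γ) y + deriv (deriv β) y with hδ''
  have hδ'd : ∀ y ∈ Ioo s2 x₀, HasDerivAt δ' (δ'' y) y := fun y hy =>
    (hγd2 y hy).add (hβd2 y hy)
  have hODE : ∀ y ∈ Ioo s2 x₀,
      deriv (deriv γ) y = (1 + deriv γ y ^ 2) * ((y / 2 - 1 / y) * deriv γ y - γ y / 2) ∧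
      deriv (deriv β) y = (1 + deriv β y ^ 2) * ((y / 2 - 1 / y) * deriv β y - β y / 2) := by
    intro y hy
    constructor
    · have h := hodeγ y hy
      rw [div_eq_iff (by positivity : (1:ℝ) + deriv γ y ^ 2 ≠ 0)] at h
      rw [h]; ring
    · have h := hodeβ y hy
      rw [div_eq_iff (by positivity : (1:ℝ) + deriv β y ^ 2 ≠ 0)] at h
      rw [h]; ring
  have hδ''pos : 0 < δ'' xb := by
    obtain ⟨h1, h2⟩ := hODE xb hxbI'
    have hβ' : deriv β xb = -deriv γ xb := by linarith
    have hδneg : γ xb + β xb < 0 := by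
      have := hγneg xb ⟨le_of_lt hxbI'.1, hxbI'.2⟩
      have := hβneg xb ⟨le_of_lt hxbI'.1, hxbI'.2⟩
      linarith
    rw [hδ'']
    simp only
    rw [h1, h2, hβ']
    nlinarith [sq_nonneg (deriv γ xb)]
  -- find a small interval to the right of xb where δ'' > 0
  have hδ''cont : ContinuousAt δ'' xb := by
    have h1 : ContinuousAt (deriv (deriv γ)) xb :=
      (hγc2 xb hxbI').continuousAt (isOpen_Ioo.mem_nhds hxbI')
    have h2 : ContinuousAt (deriv (deriv β)) xb :=
      (hβc2 xb hxbI').continuousAt (isOpen_Ioo.mem_nhds hxbI')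
    exact h1.add h2
  have hev : ∀ᶠ y in nhds xb, 0 < δ'' y ∧ y ∈ Ioo x₁ x₀ := by
    have e1 : ∀ᶠ y in nhds xb, 0 < δ'' y :=
      hδ''cont.eventually_mem (Ioi_mem_nhds hδ''pos)
    have e2 : ∀ᶠ y in nhds xb, y ∈ Ioo x₁ x₀ := isOpen_Ioo.mem_nhds hxbI
    filter_upwards [e1, e2] with y hy1 hy2
    exact ⟨hy1, hy2⟩
  obtain ⟨ρ, hρpos, hρ⟩ := Metric.eventually_nhds_iff.1 hev
  obtain ⟨b, hb⟩ : ∃ b, b = xb + ρ / 2 := ⟨_, rfl⟩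
  have hbmem : ∀ y ∈ Icc xb b, 0 < δ'' y ∧ y ∈ Ioo x₁ x₀ := by
    intro y hy
    apply hρ
    rw [Real.dist_eq, abs_lt]
    simp only [mem_Icc] at hy
    constructor
    · linarith [hy.1, hρpos]
    · linarith [hy.2, hb]
  have hxbb : xb < b := by rw [hb]; linarith
  have hIccI : Icc xb b ⊆ Ioo s2 x₀ := fun w hw => by
    have := (hbmem w hw).2
    exact ⟨lt_of_le_of_lt hx₁.1 this.1, this.2⟩
  have hδ'mono : StrictMonoOn δ' (Icc xb b) := by
    apply strictMonoOn_of_deriv_pos (convex_Icc _ _)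
    · exact fun y hy => ((hδ'd y (hIccI hy)).continuousAt).continuousWithinAt
    · intro y hy
      rw [interior_Icc] at hy
      have hy' : y ∈ Icc xb b := ⟨le_of_lt hy.1, le_of_lt hy.2⟩
      rw [(hδ'd y (hIccI hy')).deriv]
      exact (hbmem y hy').1
  have hδ'pos : ∀ y, xb < y → y ≤ b → 0 < δ' y := by
    intro y hy1 hy2
    have := hδ'mono (left_mem_Icc.2 (le_of_lt hxbb)) ⟨le_of_lt hy1, hy2⟩ hy1
    have h0 : δ' xb = 0 := hδ'0
    linarith [h0 ▸ this]
  have hδmono : StrictMonoOn δ (Icc xb b) := by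
    apply strictMonoOn_of_deriv_pos (convex_Icc _ _)
    · exact fun y hy => ((hδd y (hIccI hy)).continuousAt).continuousWithinAt
    · intro y hy
      rw [interior_Icc] at hy
      have hy' : y ∈ Icc xb b := ⟨le_of_lt hy.1, le_of_lt hy.2⟩
      rw [(hδd y (hIccI hy')).deriv]
      exact hδ'pos y hy.1 (le_of_lt hy.2)
  have hfinal : δ xb < δ b :=
    hδmono (left_mem_Icc.2 (le_of_lt hxbb)) (right_mem_Icc.2 (le_of_lt hxbb)) hxbb
  have hbmem' : b ∈ Icc x₁ x₀ := by
    have := (hbmem b (right_mem_Icc.2 (le_of_lt hxbb))).2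
    exact ⟨le_of_lt this.1, le_of_lt this.2⟩
  have hFb : F b = δ b := hFeqIio b (hbmem b (right_mem_Icc.2 (le_of_lt hxbb))).2.2
  have hFxb : F xb = δ xb := hFeqIio xb hxbI.2
  have hle : F b ≤ F xb := hxbmax hbmem'
  rw [hFb, hFxb] at hle
  linarith

theorem stmt_16 (γ β α : ℝ → ℝ) (x₀ z₀ ε η : ℝ)
    (hx₀ : Real.sqrt 2 < x₀) (hx₀' : 2 * Real.sqrt 2 < x₀) (hz₀ : z₀ < 0)
    (hregγ : ContDiffOn ℝ 2 γ (Ico (2 * Real.sqrt 2) x₀))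
    (hregβ : ContDiffOn ℝ 2 β (Ico (2 * Real.sqrt 2) x₀))
    (hodeγ : ∀ x ∈ Ioo (2 * Real.sqrt 2) x₀,
      deriv (deriv γ) x / (1 + (deriv γ x) ^ 2) = (x / 2 - 1 / x) * deriv γ x - γ x / 2)
    (hodeβ : ∀ x ∈ Ioo (2 * Real.sqrt 2) x₀,
      deriv (deriv β) x / (1 + (deriv β x) ^ 2) = (x / 2 - 1 / x) * deriv β x - β x / 2)
    (hlimγ : Tendsto γ (nhdsWithin x₀ (Iio x₀)) (nhds z₀))
    (hlimβ : Tendsto β (nhdsWithin x₀ (Iio x₀)) (nhds z₀))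
    (hblowγ : Tendsto (deriv γ) (nhdsWithin x₀ (Iio x₀)) atBot)
    (hblowβ : Tendsto (deriv β) (nhdsWithin x₀ (Iio x₀)) atTop)
    (hγneg : ∀ x ∈ Ico (2 * Real.sqrt 2) x₀, γ x ≤ 0)
    (hβneg : ∀ x ∈ Ico (2 * Real.sqrt 2) x₀, β x < 0)
    (hε : 0 < ε)
    (hregα : ContDiffOn ℝ 2 α (Ioo (z₀ - ε) (z₀ + ε)))
    (hodeα : ∀ z ∈ Ioo (z₀ - ε) (z₀ + ε),
      deriv (deriv α) z / (1 + (deriv α z) ^ 2) = (1 / α z - α z / 2) + z / 2 * deriv α z)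
    (hα0 : α z₀ = x₀) (hα0' : deriv α z₀ = 0)
    (hη : 0 < η)
    (hgraph : ∀ x ∈ Ioo (x₀ - η) x₀, α (γ x) = x ∧ α (β x) = x) :
    ∀ x ∈ Ico (2 * Real.sqrt 2) x₀, 2 * z₀ < γ x + β x := by
  have hs2pos : (0:ℝ) < 2 * Real.sqrt 2 := by positivity
  have hx₀pos : 0 < x₀ := lt_trans hs2pos hx₀'
  have hz₀J : z₀ ∈ Ioo (z₀ - ε) (z₀ + ε) := by constructor <;> linarith
  obtain ⟨hγd, hγd2, hγc2⟩ := smooth2 isOpen_Ioo (hregγ.mono Ioo_subset_Ico_self)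
  obtain ⟨hβd, hβd2, hβc2⟩ := smooth2 isOpen_Ioo (hregβ.mono Ioo_subset_Ico_self)
  obtain ⟨hαd, hαd2, hαc2⟩ := smooth2 isOpen_Ioo hregα
  set A : ℝ := 1 / x₀ - x₀ / 2 with hA
  have hAneg : A < 0 := by
    have h2 : (2:ℝ) < x₀ ^ 2 := by
      have := Real.sq_sqrt (le_of_lt (by norm_num : (0:ℝ) < 2))
      nlinarith [Real.sqrt_nonneg 2]
    rw [hA, sub_neg, div_lt_div_iff₀ hx₀pos (by norm_num : (0:ℝ) < 2)]
    nlinarith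
  have hddz₀ : deriv (deriv α) z₀ = A := by
    have := hodeα z₀ hz₀J
    rw [hα0, hα0'] at this
    simpa [hA] using this
  have hda : HasDerivAt (deriv α) A z₀ := hddz₀ ▸ hαd2 z₀ hz₀J
  have ha : HasDerivAt α 0 z₀ := hα0' ▸ hαd z₀ hz₀J
  have hdd3 : HasDerivAt (deriv (deriv α)) (z₀ * A / 2) z₀ :=
    aux16_1 α x₀ z₀ ε hε hx₀pos hαd hαd2 hodeα hα0 hα0' hz₀J A hda ha
  obtain ⟨m, hmpos, hmε, hcmp, hmono⟩ :=
    aux16_2 α z₀ ε A hε hz₀ hAneg hαd hαd2 hα0' hda hdd3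
  obtain ⟨l, hls2, hlx₀, hstep1⟩ :=
    aux16_3 γ β α x₀ z₀ η m (2 * Real.sqrt 2) hs2pos hx₀' hη hmpos
      (hregγ.continuousOn) (hregβ.continuousOn) hlimγ hlimβ hblowγ hblowβ hgraph hcmp hmono
  exact aux16_4 γ β x₀ z₀ l (2 * Real.sqrt 2) hx₀' hz₀
    (hregγ.continuousOn) (hregβ.continuousOn) hγd hγd2 hγc2 hβd hβd2 hβc2 hodeγ hodeβ
    hγneg hβneg hlimγ hlimβ hls2 hlx₀ hstep1
end

section
/- Let β solve β''/(1+(β')²) = (x/2 - 1/x)·β' - β/2 on (a, 1] with β < 0 and β' < 0 on (a, 1], and β'(1) ≤ ((√2 - 1)/2)·β(1). Then for all x ∈ (a, 1): β'(x) ≤ (β'(1)/x)·e^{-1/4} and β(x) ≥ β(1) + β'(1)·e^{-1/4}·log x ≥ β'(1)·(2/(√2-1) + e^{-1/4}·log x). In particular, if a < e^{-2e^{1/4}/(√2-1)} then β must attain the value 0 (contradiction with β < 0), i.e., β cannot stay negative down to such a small a. -/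
open Set Real Filter

theorem stmt_18 (β : ℝ → ℝ) (a : ℝ) (ha : 0 ≤ a) (ha' : a < 1)
    (hreg : ContDiffOn ℝ 2 β (Ioc a 1))
    (hode : ∀ x ∈ Ioc a 1,
      deriv (deriv β) x / (1 + (deriv β x) ^ 2) = (x / 2 - 1 / x) * deriv β x - β x / 2)
    (hneg : ∀ x ∈ Ioc a 1, β x < 0)
    (hdec : ∀ x ∈ Ioc a 1, deriv β x < 0)
    (hval : deriv β 1 ≤ (Real.sqrt 2 - 1) / 2 * β 1) :
    (∀ x ∈ Ioo a 1,
      deriv β x ≤ deriv β 1 / x * Real.exp (-1 / 4) ∧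
      β 1 + deriv β 1 * Real.exp (-1 / 4) * Real.log x ≤ β x ∧
      deriv β 1 * (2 / (Real.sqrt 2 - 1) + Real.exp (-1 / 4) * Real.log x) ≤
        β 1 + deriv β 1 * Real.exp (-1 / 4) * Real.log x) ∧
    Real.exp (-(2 * Real.exp (1 / 4)) / (Real.sqrt 2 - 1)) ≤ a := by
  have hs2 : (1:ℝ) < Real.sqrt 2 := by
    have h := Real.sqrt_lt_sqrt (by norm_num : (0:ℝ) ≤ 1) (by norm_num : (1:ℝ) < 2)
    simpa using h
  have hs2' : (0:ℝ) < Real.sqrt 2 - 1 := by linarith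
  -- positivity of t on the interval
  have hpos : ∀ t ∈ Ioc a 1, 0 < t := fun t ht => lt_of_le_of_lt ha ht.1
  -- β is differentiable on Ioc a 1 (junk-value argument using hdec)
  have hβdiff : ∀ t ∈ Ioc a 1, DifferentiableAt ℝ β t := by
    intro t ht
    by_contra h
    have := hdec t ht
    rw [deriv_zero_of_not_differentiableAt h] at this
    linarith
  -- the second derivative is positive on Ioc a 1
  have hq : ∀ t ∈ Ioc a 1, 0 < deriv (deriv β) t := by
    intro t ht
    have hp := hdec t ht
    have hb := hneg t ht
    have ht0 := hpos t ht
    have h1t : (1:ℝ) ≤ 1 / t := by rw [le_div_iff₀ ht0]; simpa using ht.2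
    have h5 : t / 2 - 1 / t < 0 := by linarith [ht.2]
    have hrhs : 0 < (t / 2 - 1 / t) * deriv β t - β t / 2 := by
      have := mul_pos_of_neg_of_neg h5 hp
      linarith
    have hden : (0:ℝ) < 1 + (deriv β t) ^ 2 := by positivity
    have heq := hode t ht
    have heq' : deriv (deriv β) t
        = ((t / 2 - 1 / t) * deriv β t - β t / 2) * (1 + (deriv β t) ^ 2) :=
      (div_eq_iff (ne_of_gt hden)).mp heq
    rw [heq']
    exact mul_pos hrhs hden
  -- deriv β is differentiable on Ioc a 1
  have hgdiff : ∀ t ∈ Ioc a 1, DifferentiableAt ℝ (deriv β) t := by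
    intro t ht
    by_contra h
    have := hq t ht
    rw [deriv_zero_of_not_differentiableAt h] at this
    linarith
  -- key differential inequality: (t/2 - 1/t) * β' ≤ β''
  have hB : ∀ t ∈ Ioc a 1, (t / 2 - 1 / t) * deriv β t ≤ deriv (deriv β) t := by
    intro t ht
    have hp := hdec t ht
    have hb := hneg t ht
    have ht0 := hpos t ht
    have h1t : (1:ℝ) ≤ 1 / t := by rw [le_div_iff₀ ht0]; simpa using ht.2
    have h5 : t / 2 - 1 / t < 0 := by linarith [ht.2]
    have hden : (0:ℝ) < 1 + (deriv β t) ^ 2 := by positivity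
    have heq' : deriv (deriv β) t
        = ((t / 2 - 1 / t) * deriv β t - β t / 2) * (1 + (deriv β t) ^ 2) :=
      (div_eq_iff (ne_of_gt hden)).mp (hode t ht)
    rw [heq']
    have h6 : 0 < (t / 2 - 1 / t) * deriv β t := mul_pos_of_neg_of_neg h5 hp
    nlinarith [sq_nonneg (deriv β t), mul_nonneg h6.le (sq_nonneg (deriv β t))]
  -- Step 1: the gradient estimate
  have hC : ∀ x ∈ Ioo a 1, deriv β x ≤ deriv β 1 / x * Real.exp (-1 / 4) := by
    intro x hx
    have hx0 : 0 < x := lt_of_le_of_lt ha hx.1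
    have hsub : Icc x 1 ⊆ Ioc a 1 := fun t ht => ⟨lt_of_lt_of_le hx.1 ht.1, ht.2⟩
    set φ : ℝ → ℝ := fun t => -(deriv β t) * (t * Real.exp (-t ^ 2 / 4)) with hφ
    have hder : ∀ t ∈ Ioc a 1, HasDerivAt φ
        (-(deriv (deriv β) t) * (t * Real.exp (-t ^ 2 / 4)) +
          -(deriv β t) * (1 * Real.exp (-t ^ 2 / 4) +
            t * (Real.exp (-t ^ 2 / 4) * (-(↑2 * t ^ 1) / 4)))) t := by
      intro t ht
      have h1 : HasDerivAt (fun s => -(deriv β s)) (-(deriv (deriv β) t)) t :=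
        ((hgdiff t ht).hasDerivAt).neg
      have h2 : HasDerivAt (fun s : ℝ => -s ^ 2 / 4) (-(↑2 * t ^ 1) / 4) t :=
        ((hasDerivAt_pow 2 t).neg).div_const 4
      have h3 := h2.exp
      have h4 : HasDerivAt (fun s : ℝ => s * Real.exp (-s ^ 2 / 4))
          (1 * Real.exp (-t ^ 2 / 4) + t * (Real.exp (-t ^ 2 / 4) * (-(↑2 * t ^ 1) / 4))) t :=
        (hasDerivAt_id t).mul h3
      exact h1.mul h4
    have hmono : AntitoneOn φ (Icc x 1) := by
      apply antitoneOn_of_deriv_nonpos (convex_Icc x 1)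
      · intro t ht
        exact ((hder t (hsub ht)).continuousAt).continuousWithinAt
      · rw [interior_Icc]
        intro t ht
        exact ((hder t (hsub (Ioo_subset_Icc_self ht))).differentiableAt).differentiableWithinAt
      · rw [interior_Icc]
        intro t ht
        have ht' : t ∈ Ioc a 1 := hsub (Ioo_subset_Icc_self ht)
        rw [(hder t ht').deriv]
        have ht0 := hpos t ht'
        have hkey : -(deriv (deriv β) t) * t - deriv β t + deriv β t * t ^ 2 / 2 ≤ 0 := by
          have h1 := mul_le_mul_of_nonneg_right (hB t ht') ht0.le
          have h2 : (t / 2 - 1 / t) * deriv β t * t = deriv β t * t ^ 2 / 2 - deriv β t := by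
            field_simp
          linarith [h1, h2.symm.le, h2.le]
        nlinarith [Real.exp_pos (-t ^ 2 / 4),
          mul_nonneg (Real.exp_pos (-t ^ 2 / 4)).le (neg_nonneg.mpr hkey)]
    have hφ1 : φ 1 ≤ φ x :=
      hmono ⟨le_refl x, hx.2.le⟩ ⟨hx.2.le, le_refl 1⟩ hx.2.le
    have hφ1v : φ 1 = -(deriv β 1) * Real.exp (-1 / 4) := by
      simp only [hφ]; norm_num
    have hexple : Real.exp (-x ^ 2 / 4) ≤ 1 := by
      rw [Real.exp_le_one_iff]
      nlinarith [sq_nonneg x]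
    have hpx := hdec x ⟨hx.1, hx.2.le⟩
    have hstep : φ x ≤ -(deriv β x) * x := by
      simp only [hφ]
      have : x * Real.exp (-x ^ 2 / 4) ≤ x * 1 :=
        mul_le_mul_of_nonneg_left hexple hx0.le
      nlinarith [this]
    have hfin : -(deriv β 1) * Real.exp (-1 / 4) ≤ -(deriv β x) * x := by
      rw [← hφ1v]; linarith
    rw [div_mul_eq_mul_div, le_div_iff₀ hx0]
    nlinarith [hfin]
  -- Step 2: the lower bound on β
  have hD : ∀ x ∈ Ioo a 1, β 1 + deriv β 1 * Real.exp (-1 / 4) * Real.log x ≤ β x := by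
    intro x hx
    have hx0 : 0 < x := lt_of_le_of_lt ha hx.1
    have hsub : Icc x 1 ⊆ Ioc a 1 := fun t ht => ⟨lt_of_lt_of_le hx.1 ht.1, ht.2⟩
    set G : ℝ → ℝ := fun t => β t - deriv β 1 * Real.exp (-1 / 4) * Real.log t with hG
    have hder : ∀ t ∈ Ioc a 1, HasDerivAt G
        (deriv β t - deriv β 1 * Real.exp (-1 / 4) * t⁻¹) t := by
      intro t ht
      exact ((hβdiff t ht).hasDerivAt).sub
        ((Real.hasDerivAt_log (ne_of_gt (hpos t ht))).const_mul
          (deriv β 1 * Real.exp (-1 / 4)))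
    have hmono : AntitoneOn G (Icc x 1) := by
      apply antitoneOn_of_deriv_nonpos (convex_Icc x 1)
      · intro t ht
        exact ((hder t (hsub ht)).continuousAt).continuousWithinAt
      · rw [interior_Icc]
        intro t ht
        exact ((hder t (hsub (Ioo_subset_Icc_self ht))).differentiableAt).differentiableWithinAt
      · rw [interior_Icc]
        intro t ht
        have ht' : t ∈ Ioo a 1 := ⟨lt_trans hx.1 ht.1, ht.2⟩
        rw [(hder t (hsub (Ioo_subset_Icc_self ht))).deriv]
        have h1 := hC t ht'
        have ht0 : 0 < t := lt_of_le_of_lt ha ht'.1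
        have h2 : deriv β 1 / t * Real.exp (-1 / 4)
            = deriv β 1 * Real.exp (-1 / 4) * t⁻¹ := by
          field_simp
        linarith [h2.le, h2.symm.le]
      -- done
    have hGx : G 1 ≤ G x := hmono ⟨le_refl x, hx.2.le⟩ ⟨hx.2.le, le_refl 1⟩ hx.2.le
    have hG1 : G 1 = β 1 := by simp [hG]
    rw [hG1] at hGx
    simp only [hG] at hGx
    linarith
  -- Step 3: the algebraic consequence of hval
  have hE : ∀ x : ℝ, deriv β 1 * (2 / (Real.sqrt 2 - 1) + Real.exp (-1 / 4) * Real.log x) ≤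
      β 1 + deriv β 1 * Real.exp (-1 / 4) * Real.log x := by
    intro x
    have h1 : deriv β 1 * (2 / (Real.sqrt 2 - 1)) ≤ β 1 := by
      have hpos2 : (0:ℝ) < 2 / (Real.sqrt 2 - 1) := by positivity
      have h := mul_le_mul_of_nonneg_right hval hpos2.le
      have h2 : (Real.sqrt 2 - 1) / 2 * β 1 * (2 / (Real.sqrt 2 - 1)) = β 1 := by
        field_simp
      rw [h2] at h
      linarith [h]
    nlinarith [h1]
  have hmain : ∀ x ∈ Ioo a 1,
      deriv β x ≤ deriv β 1 / x * Real.exp (-1 / 4) ∧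
      β 1 + deriv β 1 * Real.exp (-1 / 4) * Real.log x ≤ β x ∧
      deriv β 1 * (2 / (Real.sqrt 2 - 1) + Real.exp (-1 / 4) * Real.log x) ≤
        β 1 + deriv β 1 * Real.exp (-1 / 4) * Real.log x :=
    fun x hx => ⟨hC x hx, hD x hx, hE x⟩
  refine ⟨hmain, ?_⟩
  by_contra hcon
  push_neg at hcon
  set E := Real.exp (-(2 * Real.exp (1 / 4)) / (Real.sqrt 2 - 1)) with hEdef
  have hE0 : 0 < E := Real.exp_pos _
  have hE1 : E < 1 := by
    rw [hEdef, Real.exp_lt_one_iff]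
    have h : (0:ℝ) < 2 * Real.exp (1 / 4) := by positivity
    have := div_pos h hs2'
    rw [neg_div]
    linarith
  set x := (a + E) / 2 with hxdef
  have hax : a < x := by rw [hxdef]; linarith
  have hxE : x < E := by rw [hxdef]; linarith
  have hx1 : x < 1 := lt_trans hxE hE1
  have hx0 : 0 < x := lt_of_le_of_lt ha hax
  have hxIoo : x ∈ Ioo a 1 := ⟨hax, hx1⟩
  have hlog : Real.log x < -(2 * Real.exp (1 / 4)) / (Real.sqrt 2 - 1) := by
    have := Real.log_lt_log hx0 hxE
    rwa [hEdef, Real.log_exp] at this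
  have hp1 := hdec 1 ⟨ha', le_refl 1⟩
  have hmul : Real.exp (-1 / 4) * Real.exp (1 / 4) = 1 := by
    rw [← Real.exp_add]; norm_num
  have hbracket : 2 / (Real.sqrt 2 - 1) + Real.exp (-1 / 4) * Real.log x < 0 := by
    have h1 : Real.exp (-1 / 4) * Real.log x
        < Real.exp (-1 / 4) * (-(2 * Real.exp (1 / 4)) / (Real.sqrt 2 - 1)) :=
      (mul_lt_mul_iff_right₀ (Real.exp_pos _)).mpr hlog
    have h2 : Real.exp (-1 / 4) * (-(2 * Real.exp (1 / 4)) / (Real.sqrt 2 - 1))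
        = -(2 / (Real.sqrt 2 - 1)) := by
      have he : Real.exp (-1 / 4) = (Real.exp (1 / 4))⁻¹ := by
        rw [← Real.exp_neg]; norm_num
      rw [he, neg_div, mul_neg, neg_inj]
      rw [eq_div_iff (ne_of_gt hs2')]
      field_simp
    rw [h2] at h1
    linarith
  have hβx := (hmain x hxIoo).2.1
  have hE3 := hE x
  have hprod : 0 < deriv β 1 * (2 / (Real.sqrt 2 - 1) + Real.exp (-1 / 4) * Real.log x) :=
    mul_pos_of_neg_of_neg hp1 hbracket
  have := hneg x ⟨hax, hx1.le⟩
  linarith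
end
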